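/- arXiv:2408.06362 — 6 statements merged into one kernel-verified Lean document; each statement's English description precedes it below -/
import Mathlib

section
/- In a probabilistic normed space (X, φ, ⊙), if a sequence (w_k) is deferred statistically convergent to ξ and also deferred statistically convergent to β with respect to the probabilistic norm φ, then ξ = β. -/
open Filter Topology
open scoped Classical

/-- Deferred density of `K` is zero w.r.t. the deferred sequences `a`, `b`. -/
def defDensityZero (a b : ℕ → ℕ) (K : Set ℕ) : Prop :=
  Tendsto (fun n => (((Finset.Ioc (a n) (b n)).filter (fun k => k ∈ K)).card : ℝ) /
      ((b n : ℝ) - (a n : ℝ))) atTop (𝓝 0)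

/-- Deferred density of `K` is one. -/
def defDensityOne (a b : ℕ → ℕ) (K : Set ℕ) : Prop :=
  Tendsto (fun n => (((Finset.Ioc (a n) (b n)).filter (fun k => k ∈ K)).card : ℝ) /
      ((b n : ℝ) - (a n : ℝ))) atTop (𝓝 1)

/-- Deferred statistical convergence of `w` to `ξ` with respect to the
probabilistic norm `φ` and deferred sequences `a`, `b`. -/
def defStatConv {X : Type*} [AddCommGroup X] (a b : ℕ → ℕ) (φ : X → ℝ → ℝ)
    (w : ℕ → X) (ξ : X) : Prop :=
  ∀ ε : ℝ, 0 < ε → ∀ σ ∈ Set.Ioo (0:ℝ) 1,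
    Tendsto (fun n => (((Finset.Ioc (a n) (b n)).filter
        (fun k => φ (w k - ξ) ε ≤ 1 - σ)).card : ℝ) / ((b n : ℝ) - (a n : ℝ)))
      atTop (𝓝 0)

/-- Uniqueness of deferred statistical limits in a PNS. -/
theorem stmt2
    {X : Type*} [AddCommGroup X] [Module ℝ X]
    (φ : X → ℝ → ℝ) (op : ℝ → ℝ → ℝ)
    -- `op` is a continuous t-norm
    (hop_comm : ∀ u v, op u v = op v u)
    (hop_assoc : ∀ u v r, op (op u v) r = op u (op v r))
    (hop_one : ∀ u, op u 1 = u)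
    (hop_mono : ∀ u v r s, u ≤ r → v ≤ s → op u v ≤ op r s)
    (hop_cont : Continuous fun p : ℝ × ℝ => op p.1 p.2)
    -- `φ τ` is a distribution function taking values in `[0,1]`
    (hφ_monotone : ∀ τ : X, Monotone (φ τ))
    (hφ_mem : ∀ (τ : X) (ε : ℝ), φ τ ε ∈ Set.Icc (0:ℝ) 1)
    -- PNS axioms
    (hφ_zero : ∀ τ : X, φ τ 0 = 0)
    (hφ_eq_one : ∀ τ : X, (∀ ε : ℝ, 0 < ε → φ τ ε = 1) ↔ τ = 0)
    (hφ_smul : ∀ (κ : ℝ) (τ : X) (ε : ℝ), κ ≠ 0 → 0 < ε →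
      φ (κ • τ) ε = φ τ (ε / |κ|))
    (hφ_tri : ∀ (τ ζ : X) (ε lam : ℝ), 0 ≤ ε → 0 ≤ lam →
      op (φ τ ε) (φ ζ lam) ≤ φ (τ + ζ) (ε + lam))
    (hop_sigma : ∀ σ ∈ Set.Ioo (0:ℝ) 1, ∃ lam ∈ Set.Ioo (0:ℝ) 1,
      1 - σ < op (1 - lam) (1 - lam))
    (a b : ℕ → ℕ) (hab : ∀ n, a n < b n) (hb : Tendsto b atTop atTop)
    (w : ℕ → X) (ξ β : X)
    (h1 : defStatConv a b φ w ξ) (h2 : defStatConv a b φ w β) :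
    ξ = β := by
  have key : ∀ ε : ℝ, 0 < ε → φ (ξ - β) ε = 1 := by
    intro ε hε
    have hub := (hφ_mem (ξ - β) ε).2
    refine le_antisymm hub ?_
    by_contra hlt
    push_neg at hlt
    set v := φ (ξ - β) ε with hv
    set σ := min (1 - v) (1/2) with hσ
    have hσmem : σ ∈ Set.Ioo (0:ℝ) 1 := by
      constructor
      · exact lt_min (by linarith) (by norm_num)
      · exact lt_of_le_of_lt (min_le_right _ _) (by norm_num)
    -- get λ
    obtain ⟨lam, hlam, hoplam⟩ := hop_sigma σ hσmem
    have hε2 : (0:ℝ) < ε / 2 := by linarith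
    have t1 := h1 (ε/2) hε2 lam hlam
    have t2 := h2 (ε/2) hε2 lam hlam
    have tsum := t1.add t2
    rw [add_zero] at tsum
    have hev : ∀ᶠ n in atTop,
        (((Finset.Ioc (a n) (b n)).filter
          (fun k => φ (w k - ξ) (ε/2) ≤ 1 - lam)).card : ℝ) / ((b n : ℝ) - (a n : ℝ)) +
        (((Finset.Ioc (a n) (b n)).filter
          (fun k => φ (w k - β) (ε/2) ≤ 1 - lam)).card : ℝ) / ((b n : ℝ) - (a n : ℝ)) < 1 :=
      tsum.eventually (gt_mem_nhds one_pos)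
    obtain ⟨n, hn⟩ := hev.exists
    have hd : (0:ℝ) < (b n : ℝ) - (a n : ℝ) := by
      have := hab n; exact sub_pos.2 (by exact_mod_cast this)
    set A := (Finset.Ioc (a n) (b n)).filter (fun k => φ (w k - ξ) (ε/2) ≤ 1 - lam)
    set B := (Finset.Ioc (a n) (b n)).filter (fun k => φ (w k - β) (ε/2) ≤ 1 - lam)
    have hcard : (A.card : ℝ) + (B.card : ℝ) < (b n : ℝ) - (a n : ℝ) := by
      have := hn
      rw [← add_div, div_lt_one hd] at this
      exact this
    -- find a good k
    have hIoc : ((Finset.Ioc (a n) (b n)).card : ℝ) = (b n : ℝ) - (a n : ℝ) := by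
      rw [Nat.card_Ioc]
      have := hab n
      push_cast [Nat.cast_sub (le_of_lt this)]
      ring
    have hex : ∃ k ∈ Finset.Ioc (a n) (b n),
        ¬ (φ (w k - ξ) (ε/2) ≤ 1 - lam) ∧ ¬ (φ (w k - β) (ε/2) ≤ 1 - lam) := by
      by_contra hcon
      push_neg at hcon
      have hsub : Finset.Ioc (a n) (b n) ⊆ A ∪ B := by
        intro k hk
        rcases le_or_gt (φ (w k - ξ) (ε/2)) (1 - lam) with h | h
        · exact Finset.mem_union_left _ (Finset.mem_filter.2 ⟨hk, h⟩)
        · have := hcon k hk h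
          exact Finset.mem_union_right _ (Finset.mem_filter.2 ⟨hk, this⟩)
      have hle : ((Finset.Ioc (a n) (b n)).card : ℝ) ≤ (A.card : ℝ) + (B.card : ℝ) := by
        have h1' := Finset.card_le_card hsub
        have h2' := Finset.card_union_le A B
        exact_mod_cast le_trans h1' h2'
      rw [hIoc] at hle
      linarith
    obtain ⟨k, _, hk1, hk2⟩ := hex
    push_neg at hk1 hk2
    -- φ (ξ - w k) = φ (w k - ξ)
    have hneg : ∀ τ : X, φ (-τ) (ε/2) = φ τ (ε/2) := by
      intro τ
      have := hφ_smul (-1) τ (ε/2) (by norm_num) hε2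
      simpa using this
    have htri := hφ_tri (ξ - w k) (w k - β) (ε/2) (ε/2) (le_of_lt hε2) (le_of_lt hε2)
    have hsumeq : (ξ - w k) + (w k - β) = ξ - β := by abel
    have heps : ε/2 + ε/2 = ε := by ring
    rw [hsumeq, heps] at htri
    have hφ1 : 1 - lam ≤ φ (ξ - w k) (ε/2) := by
      have : ξ - w k = -(w k - ξ) := by abel
      rw [this, hneg]
      exact le_of_lt hk1
    have hmono := hop_mono (1 - lam) (1 - lam) (φ (ξ - w k) (ε/2)) (φ (w k - β) (ε/2))
      hφ1 (le_of_lt hk2)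
    have : 1 - σ < v := lt_of_lt_of_le hoplam (le_trans hmono htri)
    have hσle : σ ≤ 1 - v := min_le_left _ _
    linarith
  exact sub_eq_zero.1 ((hφ_eq_one (ξ - β)).1 key)
end

section
/- In a probabilistic normed space, if the set {k ∈ ℕ : w_k ≠ l_k} has deferred density zero and l_k converges to ξ with respect to the probabilistic norm φ, then (w_k) is deferred statistically convergent to ξ. -/
open Filter Topology
open scoped Classical

/-- If `w` and `l` agree outside a set of deferred density zero and `l`
converges to `ξ` w.r.t. the probabilistic norm, then `w` is deferred
statistically convergent to `ξ`. -/
theorem stmt7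
    {X : Type*} [AddCommGroup X] [Module ℝ X]
    (φ : X → ℝ → ℝ) (op : ℝ → ℝ → ℝ)
    -- `op` is a continuous t-norm
    (hop_comm : ∀ u v, op u v = op v u)
    (hop_assoc : ∀ u v r, op (op u v) r = op u (op v r))
    (hop_one : ∀ u, op u 1 = u)
    (hop_mono : ∀ u v r s, u ≤ r → v ≤ s → op u v ≤ op r s)
    (hop_cont : Continuous fun p : ℝ × ℝ => op p.1 p.2)
    -- `φ τ` is a distribution function taking values in `[0,1]`
    (hφ_monotone : ∀ τ : X, Monotone (φ τ))
    (hφ_mem : ∀ (τ : X) (ε : ℝ), φ τ ε ∈ Set.Icc (0:ℝ) 1)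
    -- PNS axioms
    (hφ_zero : ∀ τ : X, φ τ 0 = 0)
    (hφ_eq_one : ∀ τ : X, (∀ ε : ℝ, 0 < ε → φ τ ε = 1) ↔ τ = 0)
    (hφ_smul : ∀ (κ : ℝ) (τ : X) (ε : ℝ), κ ≠ 0 → 0 < ε →
      φ (κ • τ) ε = φ τ (ε / |κ|))
    (hφ_tri : ∀ (τ ζ : X) (ε lam : ℝ), 0 ≤ ε → 0 ≤ lam →
      op (φ τ ε) (φ ζ lam) ≤ φ (τ + ζ) (ε + lam))
    (a b : ℕ → ℕ) (hab : ∀ n, a n < b n) (hb : Tendsto b atTop atTop)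
    (w l : ℕ → X) (ξ : X)
    (hwl : defDensityZero a b {k | w k ≠ l k})
    (hl : ∀ ε : ℝ, 0 < ε → ∀ σ ∈ Set.Ioo (0:ℝ) 1,
      ∃ n₀ : ℕ, ∀ k ≥ n₀, 1 - σ < φ (l k - ξ) ε) :
    defStatConv a b φ w ξ := by
  intro ε hε σ hσ
  obtain ⟨n₀, hn₀⟩ := hl ε hε σ hσ
  have hD : ∀ n, (0:ℝ) < (b n : ℝ) - a n := fun n => by
    have := hab n
    have : (a n : ℝ) < b n := by exact_mod_cast this
    linarith
  -- split the bad set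
  have key : ∀ n, (((Finset.Ioc (a n) (b n)).filter
        (fun k => φ (w k - ξ) ε ≤ 1 - σ)).card : ℝ)
      ≤ (((Finset.Ioc (a n) (b n)).filter (fun k => k < n₀)).card : ℝ)
        + (((Finset.Ioc (a n) (b n)).filter (fun k => k ∈ {k | w k ≠ l k})).card : ℝ) := by
    intro n
    have hsub : (Finset.Ioc (a n) (b n)).filter (fun k => φ (w k - ξ) ε ≤ 1 - σ)
        ⊆ ((Finset.Ioc (a n) (b n)).filter (fun k => k < n₀)) ∪
          ((Finset.Ioc (a n) (b n)).filter (fun k => k ∈ {k | w k ≠ l k})) := by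
      intro k hk
      simp only [Finset.mem_filter, Finset.mem_union, Set.mem_setOf_eq] at *
      obtain ⟨hk1, hk2⟩ := hk
      by_cases h : k < n₀
      · exact Or.inl ⟨hk1, h⟩
      · refine Or.inr ⟨hk1, fun heq => ?_⟩
        have := hn₀ k (le_of_not_gt h)
        rw [heq] at hk2
        linarith
    have := (Finset.card_le_card hsub).trans (Finset.card_union_le _ _)
    exact_mod_cast this
  -- the "initial segment" ratio tends to 0
  have h1 : Tendsto (fun n => (((Finset.Ioc (a n) (b n)).filter
      (fun k => k < n₀)).card : ℝ) / ((b n : ℝ) - a n)) atTop (𝓝 0) := by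
    have hbtop : Tendsto (fun n => (b n : ℝ)) atTop atTop :=
      tendsto_natCast_atTop_atTop.comp hb
    have hRHS : Tendsto (fun n => (n₀ : ℝ) / ((b n : ℝ) - n₀)) atTop (𝓝 0) := by
      apply Tendsto.div_atTop tendsto_const_nhds
      exact tendsto_atTop_add_const_right _ _ hbtop
    have hev : ∀ᶠ n in atTop, (b n : ℕ) > n₀ := hb.eventually_gt_atTop n₀
    apply squeeze_zero' (g := fun n => (n₀ : ℝ) / ((b n : ℝ) - n₀))
    · filter_upwards with n
      exact div_nonneg (by positivity) (hD n).le
    · filter_upwards [hev] with n hn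
      have hbn : (n₀ : ℝ) < b n := by exact_mod_cast hn
      by_cases hA : n₀ ≤ a n + 1
      · have : (Finset.Ioc (a n) (b n)).filter (fun k => k < n₀) = ∅ := by
          apply Finset.filter_false_of_mem
          intro k hk
          simp only [Finset.mem_Ioc] at hk
          omega
        rw [this]
        simp only [Finset.card_empty, Nat.cast_zero, zero_div]
        exact div_nonneg (by positivity) (by linarith)
      · push_neg at hA
        have hcard : (((Finset.Ioc (a n) (b n)).filter (fun k => k < n₀)).card : ℝ)
            ≤ (n₀ : ℝ) := by
          have : (Finset.Ioc (a n) (b n)).filter (fun k => k < n₀) ⊆ Finset.range n₀ := by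
            intro k hk
            simp only [Finset.mem_filter, Finset.mem_range] at *
            exact hk.2
          have := Finset.card_le_card this
          rw [Finset.card_range] at this
          exact_mod_cast this
        have han : (a n : ℝ) < n₀ := by
          have : a n < n₀ := by omega
          exact_mod_cast this
        calc (((Finset.Ioc (a n) (b n)).filter (fun k => k < n₀)).card : ℝ)
              / ((b n : ℝ) - a n)
            ≤ (n₀ : ℝ) / ((b n : ℝ) - a n) := by gcongr; exact (hD n).le
          _ ≤ (n₀ : ℝ) / ((b n : ℝ) - n₀) := by gcongr
    · exact hRHS
  -- put it together
  have hsum := h1.add hwl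
  rw [add_zero] at hsum
  apply squeeze_zero' (g := fun n =>
      (((Finset.Ioc (a n) (b n)).filter (fun k => k < n₀)).card : ℝ) / ((b n : ℝ) - a n)
      + (((Finset.Ioc (a n) (b n)).filter (fun k => k ∈ {k | w k ≠ l k})).card : ℝ)
        / ((b n : ℝ) - a n))
  · filter_upwards with n
    exact div_nonneg (by positivity) (hD n).le
  · filter_upwards with n
    rw [← add_div]
    gcongr
    · exact (hD n).le
    · exact key n
  · refine hsum.congr fun n => ?_
    congr!
end

section
/- In a probabilistic normed space, suppose the sequence n ↦ α(n)/(ϑ(n) − α(n)) is bounded. If (w_k) is statistically convergent to ξ with respect to φ (i.e., lim_{n→∞} (1/n)|{k ≤ n : φ(w_k − ξ; ε) ≤ 1 − σ}| = 0 for all ε > 0, σ ∈ (0,1)), then (w_k) is deferred statistically convergent to ξ with respect to α, ϑ. -/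
open Filter Topology
open scoped Classical

/-- If `n ↦ a n / (b n - a n)` is bounded, statistical convergence with respect
to `φ` implies deferred statistical convergence. -/
theorem stmt8
    {X : Type*} [AddCommGroup X] [Module ℝ X]
    (φ : X → ℝ → ℝ) (op : ℝ → ℝ → ℝ)
    -- `op` is a continuous t-norm
    (hop_comm : ∀ u v, op u v = op v u)
    (hop_assoc : ∀ u v r, op (op u v) r = op u (op v r))
    (hop_one : ∀ u, op u 1 = u)
    (hop_mono : ∀ u v r s, u ≤ r → v ≤ s → op u v ≤ op r s)
    (hop_cont : Continuous fun p : ℝ × ℝ => op p.1 p.2)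
    -- `φ τ` is a distribution function taking values in `[0,1]`
    (hφ_monotone : ∀ τ : X, Monotone (φ τ))
    (hφ_mem : ∀ (τ : X) (ε : ℝ), φ τ ε ∈ Set.Icc (0:ℝ) 1)
    -- PNS axioms
    (hφ_zero : ∀ τ : X, φ τ 0 = 0)
    (hφ_eq_one : ∀ τ : X, (∀ ε : ℝ, 0 < ε → φ τ ε = 1) ↔ τ = 0)
    (hφ_smul : ∀ (κ : ℝ) (τ : X) (ε : ℝ), κ ≠ 0 → 0 < ε →
      φ (κ • τ) ε = φ τ (ε / |κ|))
    (hφ_tri : ∀ (τ ζ : X) (ε lam : ℝ), 0 ≤ ε → 0 ≤ lam →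
      op (φ τ ε) (φ ζ lam) ≤ φ (τ + ζ) (ε + lam))
    (a b : ℕ → ℕ) (hab : ∀ n, a n < b n) (hb : Tendsto b atTop atTop)
    (hbd : ∃ M : ℝ, ∀ n, (a n : ℝ) / ((b n : ℝ) - (a n : ℝ)) ≤ M)
    (w : ℕ → X) (ξ : X)
    (h : ∀ ε : ℝ, 0 < ε → ∀ σ ∈ Set.Ioo (0:ℝ) 1,
      Tendsto (fun n => (((Finset.Icc 1 n).filter
          (fun k => φ (w k - ξ) ε ≤ 1 - σ)).card : ℝ) / (n : ℝ)) atTop (𝓝 0)) :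
    defStatConv a b φ w ξ := by
  intro ε hε σ hσ
  obtain ⟨M, hM⟩ := hbd
  have hM0 : 0 ≤ M := by
    refine le_trans ?_ (hM 0)
    have h0 : (a 0 : ℝ) < b 0 := by exact_mod_cast hab 0
    exact div_nonneg (Nat.cast_nonneg _) (by linarith)
  have hf : Tendsto (fun n => (1 + M) *
      ((((Finset.Icc 1 (b n)).filter (fun k => φ (w k - ξ) ε ≤ 1 - σ)).card : ℝ) / (b n : ℝ)))
      atTop (𝓝 0) := by
    have := ((h ε hε σ hσ).comp hb).const_mul (1 + M)
    simpa using this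
  refine squeeze_zero (fun n => ?_) (fun n => ?_) hf
  · have hba : (0:ℝ) < (b n : ℝ) - (a n : ℝ) := by
      have : (a n : ℝ) < b n := by exact_mod_cast hab n
      linarith
    exact div_nonneg (Nat.cast_nonneg _) hba.le
  · have hban : (a n : ℝ) < b n := by exact_mod_cast hab n
    have hba : (0:ℝ) < (b n : ℝ) - (a n : ℝ) := by linarith
    have hbpos : (0:ℝ) < (b n : ℝ) := lt_of_le_of_lt (Nat.cast_nonneg _) hban
    set c₁ := (((Finset.Ioc (a n) (b n)).filter (fun k => φ (w k - ξ) ε ≤ 1 - σ)).card : ℝ)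
    set c₂ := (((Finset.Icc 1 (b n)).filter (fun k => φ (w k - ξ) ε ≤ 1 - σ)).card : ℝ)
    have hc12 : c₁ ≤ c₂ := by
      have hsub : Finset.Ioc (a n) (b n) ⊆ Finset.Icc 1 (b n) := by
        intro k hk
        simp only [Finset.mem_Ioc, Finset.mem_Icc] at hk ⊢
        omega
      have := Finset.card_le_card (Finset.filter_subset_filter (fun k => φ (w k - ξ) ε ≤ 1 - σ) hsub)
      simp only [c₁, c₂]
      exact_mod_cast this
    have hc2 : 0 ≤ c₂ := Nat.cast_nonneg _
    have hMa : (a n : ℝ) ≤ M * ((b n : ℝ) - (a n : ℝ)) := by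
      have := hM n
      rwa [div_le_iff₀ hba] at this
    rw [div_le_iff₀ hba, mul_comm (1 + M), mul_assoc, div_mul_eq_mul_div, le_div_iff₀ hbpos]
    nlinarith [hc12, hc2, hMa, hba.le, hbpos.le]
end

section
/- Let α, ϑ, ϱ, ς be sequences of non-negative integers with α(n) ≤ ϱ(n) < ς(n) ≤ ϑ(n) for all n, ϑ(n) → ∞ and ς(n) → ∞. Suppose the sets {k ∈ ℕ : α(n) < k ≤ ϱ(n) for some n} and {k ∈ ℕ : ς(n) < k ≤ ϑ(n) for some n} are finite. If (w_k) in a probabilistic normed space is deferred statistically convergent to ξ with respect to (ϱ, ς), then it is deferred statistically convergent to ξ with respect to (α, ϑ). -/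
open Filter Topology
open scoped Classical

/-- If the leftover index sets are finite, deferred statistical convergence
w.r.t. the inner pair `(ρ, ς)` implies that w.r.t. the outer pair `(a, b)`. -/
theorem stmt9
    {X : Type*} [AddCommGroup X] [Module ℝ X]
    (φ : X → ℝ → ℝ) (op : ℝ → ℝ → ℝ)
    -- `op` is a continuous t-norm
    (hop_comm : ∀ u v, op u v = op v u)
    (hop_assoc : ∀ u v r, op (op u v) r = op u (op v r))
    (hop_one : ∀ u, op u 1 = u)
    (hop_mono : ∀ u v r s, u ≤ r → v ≤ s → op u v ≤ op r s)
    (hop_cont : Continuous fun p : ℝ × ℝ => op p.1 p.2)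
    -- `φ τ` is a distribution function taking values in `[0,1]`
    (hφ_monotone : ∀ τ : X, Monotone (φ τ))
    (hφ_mem : ∀ (τ : X) (ε : ℝ), φ τ ε ∈ Set.Icc (0:ℝ) 1)
    -- PNS axioms
    (hφ_zero : ∀ τ : X, φ τ 0 = 0)
    (hφ_eq_one : ∀ τ : X, (∀ ε : ℝ, 0 < ε → φ τ ε = 1) ↔ τ = 0)
    (hφ_smul : ∀ (κ : ℝ) (τ : X) (ε : ℝ), κ ≠ 0 → 0 < ε →
      φ (κ • τ) ε = φ τ (ε / |κ|))
    (hφ_tri : ∀ (τ ζ : X) (ε lam : ℝ), 0 ≤ ε → 0 ≤ lam →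
      op (φ τ ε) (φ ζ lam) ≤ φ (τ + ζ) (ε + lam))
    (a b ρ ς : ℕ → ℕ)
    (h1 : ∀ n, a n ≤ ρ n) (h2 : ∀ n, ρ n < ς n) (h3 : ∀ n, ς n ≤ b n)
    (hb : Tendsto b atTop atTop) (hς : Tendsto ς atTop atTop)
    (hfin1 : {k : ℕ | ∃ n, a n < k ∧ k ≤ ρ n}.Finite)
    (hfin2 : {k : ℕ | ∃ n, ς n < k ∧ k ≤ b n}.Finite)
    (w : ℕ → X) (ξ : X)
    (h : defStatConv ρ ς φ w ξ) :
    defStatConv a b φ w ξ := by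
  intro ε hε σ hσ
  have hmain := h ε hε σ hσ
  have hab : ∀ n, (a n : ℝ) < b n := fun n =>
    Nat.cast_lt.mpr (lt_of_le_of_lt (h1 n) (lt_of_lt_of_le (h2 n) (h3 n)))
  have hden : ∀ n, (0:ℝ) < (b n : ℝ) - a n := fun n => sub_pos.mpr (hab n)
  have hden2 : ∀ n, (0:ℝ) < (ς n : ℝ) - ρ n := fun n =>
    sub_pos.mpr (Nat.cast_lt.mpr (h2 n))
  have hlediff : ∀ n, (ς n : ℝ) - ρ n ≤ (b n : ℝ) - a n := fun n =>
    sub_le_sub (Nat.cast_le.mpr (h3 n)) (Nat.cast_le.mpr (h1 n))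
  set cond : ℕ → Prop := fun k => φ (w k - ξ) ε ≤ 1 - σ with hcond
  set S1 := hfin1.toFinset with hS1
  set S2 := hfin2.toFinset with hS2
  set M0 := S1.sup id with hM0
  set M2 := S2.sup id with hM2
  have hsub1 : ∀ n, (Finset.Ioc (a n) (ρ n)).filter cond ⊆ S1 := by
    intro n k hk
    simp only [Finset.mem_filter, Finset.mem_Ioc] at hk
    exact hfin1.mem_toFinset.mpr ⟨n, hk.1.1, hk.1.2⟩
  have hsub2 : ∀ n, (Finset.Ioc (ς n) (b n)).filter cond ⊆ S2 := by
    intro n k hk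
    simp only [Finset.mem_filter, Finset.mem_Ioc] at hk
    exact hfin2.mem_toFinset.mpr ⟨n, hk.1.1, hk.1.2⟩
  -- the middle term
  have ht1 : Tendsto (fun n => (((Finset.Ioc (ρ n) (ς n)).filter cond).card : ℝ) /
      ((b n : ℝ) - a n)) atTop (𝓝 0) := by
    refine squeeze_zero (fun n => div_nonneg (Nat.cast_nonneg _) (hden n).le)
      (fun n => div_le_div₀ (Nat.cast_nonneg _) le_rfl (hden2 n) (hlediff n)) hmain
  -- the first leftover term
  have hbR : Tendsto (fun n => (b n : ℝ)) atTop atTop :=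
    tendsto_natCast_atTop_atTop.comp hb
  have hbM : Tendsto (fun n => (b n : ℝ) - M0) atTop atTop := by
    refine (tendsto_atTop_add_const_right atTop (-(M0:ℝ)) hbR).congr fun n => ?_
    ring
  have hlim : Tendsto (fun n => ((S1.card : ℝ)) / ((b n : ℝ) - M0)) atTop (𝓝 0) :=
    tendsto_const_nhds.div_atTop hbM
  have ht2 : Tendsto (fun n => (((Finset.Ioc (a n) (ρ n)).filter cond).card : ℝ) /
      ((b n : ℝ) - a n)) atTop (𝓝 0) := by
    refine squeeze_zero'
      (Eventually.of_forall fun n => div_nonneg (Nat.cast_nonneg _) (hden n).le)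
      ?_ hlim
    filter_upwards [hb.eventually_gt_atTop M0] with n hn
    have hbM0 : (M0:ℝ) < b n := Nat.cast_lt.mpr hn
    by_cases hcase : a n < M0
    · refine div_le_div₀ (Nat.cast_nonneg _) ?_ (by linarith) ?_
      · exact_mod_cast Finset.card_le_card (hsub1 n)
      · have : (a n : ℝ) ≤ M0 := Nat.cast_le.mpr hcase.le
        linarith
    · push_neg at hcase
      have hempty : (Finset.Ioc (a n) (ρ n)).filter cond = ∅ := by
        apply Finset.eq_empty_of_forall_notMem
        intro k hk
        have hkM : k ≤ M0 := Finset.le_sup (f := id) (hsub1 n hk)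
        simp only [Finset.mem_filter, Finset.mem_Ioc] at hk
        omega
      rw [hempty]
      simp only [Finset.card_empty, Nat.cast_zero, zero_div]
      exact div_nonneg (Nat.cast_nonneg _) (by linarith)
  -- the second leftover term
  have ht3 : Tendsto (fun n => (((Finset.Ioc (ς n) (b n)).filter cond).card : ℝ) /
      ((b n : ℝ) - a n)) atTop (𝓝 0) := by
    refine Tendsto.congr' ?_ (tendsto_const_nhds : Tendsto (fun _ : ℕ => (0:ℝ)) atTop (𝓝 0))
    filter_upwards [hς.eventually_gt_atTop M2] with n hn
    have hempty : (Finset.Ioc (ς n) (b n)).filter cond = ∅ := by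
      apply Finset.eq_empty_of_forall_notMem
      intro k hk
      have hkM : k ≤ M2 := Finset.le_sup (f := id) (hsub2 n hk)
      simp only [Finset.mem_filter, Finset.mem_Ioc] at hk
      omega
    rw [hempty]
    simp
  have hsum := (ht2.add ht1).add ht3
  rw [add_zero, add_zero] at hsum
  refine squeeze_zero (fun n => div_nonneg (Nat.cast_nonneg _) (hden n).le) ?_ hsum
  intro n
  have hsplit : Finset.Ioc (a n) (b n) =
      (Finset.Ioc (a n) (ρ n) ∪ Finset.Ioc (ρ n) (ς n)) ∪ Finset.Ioc (ς n) (b n) := by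
    rw [Finset.Ioc_union_Ioc_eq_Ioc (h1 n) (h2 n).le,
      Finset.Ioc_union_Ioc_eq_Ioc (le_trans (h1 n) (h2 n).le) (h3 n)]
  have hcard : (((Finset.Ioc (a n) (b n)).filter cond).card : ℝ) ≤
      (((Finset.Ioc (a n) (ρ n)).filter cond).card : ℝ) +
      (((Finset.Ioc (ρ n) (ς n)).filter cond).card : ℝ) +
      (((Finset.Ioc (ς n) (b n)).filter cond).card : ℝ) := by
    rw [hsplit, Finset.filter_union, Finset.filter_union]
    push_cast
    calc ((((Finset.Ioc (a n) (ρ n)).filter cond ∪ (Finset.Ioc (ρ n) (ς n)).filter cond)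
          ∪ (Finset.Ioc (ς n) (b n)).filter cond).card : ℝ)
        ≤ (((Finset.Ioc (a n) (ρ n)).filter cond ∪
            (Finset.Ioc (ρ n) (ς n)).filter cond).card : ℝ) +
          (((Finset.Ioc (ς n) (b n)).filter cond).card : ℝ) := by
          exact_mod_cast Finset.card_union_le _ _
      _ ≤ _ := by
          have := Finset.card_union_le ((Finset.Ioc (a n) (ρ n)).filter cond)
            ((Finset.Ioc (ρ n) (ς n)).filter cond)
          have : (((Finset.Ioc (a n) (ρ n)).filter cond ∪
              (Finset.Ioc (ρ n) (ς n)).filter cond).card : ℝ) ≤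
              (((Finset.Ioc (a n) (ρ n)).filter cond).card : ℝ) +
              (((Finset.Ioc (ρ n) (ς n)).filter cond).card : ℝ) := by exact_mod_cast this
          linarith
  calc (((Finset.Ioc (a n) (b n)).filter cond).card : ℝ) / ((b n : ℝ) - a n)
      ≤ ((((Finset.Ioc (a n) (ρ n)).filter cond).card : ℝ) +
         (((Finset.Ioc (ρ n) (ς n)).filter cond).card : ℝ) +
         (((Finset.Ioc (ς n) (b n)).filter cond).card : ℝ)) / ((b n : ℝ) - a n) := by
        exact div_le_div₀ (by positivity) hcard (hden n) le_rfl
    _ = (((Finset.Ioc (a n) (ρ n)).filter cond).card : ℝ) / ((b n : ℝ) - a n) +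
        (((Finset.Ioc (ρ n) (ς n)).filter cond).card : ℝ) / ((b n : ℝ) - a n) +
        (((Finset.Ioc (ς n) (b n)).filter cond).card : ℝ) / ((b n : ℝ) - a n) := by
        ring
end

section
/- Let α, ϑ, ϱ, ς be sequences of non-negative integers with α(n) ≤ ϱ(n) < ς(n) ≤ ϑ(n) for all n, ϑ(n) → ∞ and ς(n) → ∞. Suppose lim_{n→∞} (ϑ(n) − α(n))/(ς(n) − ϱ(n)) = β for some β > 0. If (w_k) in a probabilistic normed space is deferred statistically convergent to ξ with respect to (α, ϑ), then it is deferred statistically convergent to ξ with respect to (ϱ, ς). -/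
open Filter Topology
open scoped Classical

/-- If `(b n - a n)/(ς n - ρ n)` converges to some `β > 0`, deferred statistical
convergence w.r.t. the outer pair `(a, b)` implies that w.r.t. `(ρ, ς)`. -/
theorem stmt10
    {X : Type*} [AddCommGroup X] [Module ℝ X]
    (φ : X → ℝ → ℝ) (op : ℝ → ℝ → ℝ)
    -- `op` is a continuous t-norm
    (hop_comm : ∀ u v, op u v = op v u)
    (hop_assoc : ∀ u v r, op (op u v) r = op u (op v r))
    (hop_one : ∀ u, op u 1 = u)
    (hop_mono : ∀ u v r s, u ≤ r → v ≤ s → op u v ≤ op r s)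
    (hop_cont : Continuous fun p : ℝ × ℝ => op p.1 p.2)
    -- `φ τ` is a distribution function taking values in `[0,1]`
    (hφ_monotone : ∀ τ : X, Monotone (φ τ))
    (hφ_mem : ∀ (τ : X) (ε : ℝ), φ τ ε ∈ Set.Icc (0:ℝ) 1)
    -- PNS axioms
    (hφ_zero : ∀ τ : X, φ τ 0 = 0)
    (hφ_eq_one : ∀ τ : X, (∀ ε : ℝ, 0 < ε → φ τ ε = 1) ↔ τ = 0)
    (hφ_smul : ∀ (κ : ℝ) (τ : X) (ε : ℝ), κ ≠ 0 → 0 < ε →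
      φ (κ • τ) ε = φ τ (ε / |κ|))
    (hφ_tri : ∀ (τ ζ : X) (ε lam : ℝ), 0 ≤ ε → 0 ≤ lam →
      op (φ τ ε) (φ ζ lam) ≤ φ (τ + ζ) (ε + lam))
    (a b ρ ς : ℕ → ℕ)
    (h1 : ∀ n, a n ≤ ρ n) (h2 : ∀ n, ρ n < ς n) (h3 : ∀ n, ς n ≤ b n)
    (hb : Tendsto b atTop atTop) (hς : Tendsto ς atTop atTop)
    (β : ℝ) (hβ : 0 < β)
    (hlim : Tendsto (fun n => ((b n : ℝ) - (a n : ℝ)) / ((ς n : ℝ) - (ρ n : ℝ)))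
      atTop (𝓝 β))
    (w : ℕ → X) (ξ : X)
    (h : defStatConv a b φ w ξ) :
    defStatConv ρ ς φ w ξ := by
  intro ε hε σ hσ
  have hout := h ε hε σ hσ
  have hprod : Tendsto (fun n =>
      ((((Finset.Ioc (a n) (b n)).filter (fun k => φ (w k - ξ) ε ≤ 1 - σ)).card : ℝ) /
        ((b n : ℝ) - (a n : ℝ))) * (((b n : ℝ) - (a n : ℝ)) / ((ς n : ℝ) - (ρ n : ℝ))))
      atTop (𝓝 0) := by
    simpa using hout.mul hlim
  have hsr : ∀ n, (0:ℝ) < (ς n : ℝ) - (ρ n : ℝ) := fun n => by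
    have : ((ρ n : ℝ)) < (ς n : ℝ) := by exact_mod_cast h2 n
    linarith
  have hba : ∀ n, (0:ℝ) < (b n : ℝ) - (a n : ℝ) := fun n => by
    have : ((a n : ℝ)) < (b n : ℝ) := by
      exact_mod_cast lt_of_le_of_lt (h1 n) (lt_of_lt_of_le (h2 n) (h3 n))
    linarith
  refine squeeze_zero (fun n => div_nonneg (by positivity) (hsr n).le) (fun n => ?_) hprod
  have hsub : Finset.Ioc (ρ n) (ς n) ⊆ Finset.Ioc (a n) (b n) := by
    apply Finset.Ioc_subset_Ioc (h1 n) (h3 n)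
  have hcard : (((Finset.Ioc (ρ n) (ς n)).filter (fun k => φ (w k - ξ) ε ≤ 1 - σ)).card : ℝ)
      ≤ (((Finset.Ioc (a n) (b n)).filter (fun k => φ (w k - ξ) ε ≤ 1 - σ)).card : ℝ) := by
    exact_mod_cast Finset.card_le_card (Finset.filter_subset_filter _ hsub)
  rw [div_mul_div_comm, mul_comm ((b n : ℝ) - (a n : ℝ)), ← div_mul_div_comm,
    div_self (hba n).ne', mul_one]
  exact (div_le_div_iff_of_pos_right (hsr n)).mpr hcard
end

section
/- In a probabilistic normed space, if (w_k) is deferred statistically convergent to some ξ, then (w_k) is a deferred statistically Cauchy sequence: for every ε > 0 and σ ∈ (0,1) there exists n₀ ∈ ℕ such that the set {k : α(n)+1 ≤ k ≤ ϑ(n), φ(w_k − w_{n₀}; ε) ≤ 1 − σ} has deferred density zero. -/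
open Filter Topology
open scoped Classical

/-- A deferred statistically convergent sequence in a PNS is deferred
statistically Cauchy. -/
theorem stmt11
    {X : Type*} [AddCommGroup X] [Module ℝ X]
    (φ : X → ℝ → ℝ) (op : ℝ → ℝ → ℝ)
    -- `op` is a continuous t-norm
    (hop_comm : ∀ u v, op u v = op v u)
    (hop_assoc : ∀ u v r, op (op u v) r = op u (op v r))
    (hop_one : ∀ u, op u 1 = u)
    (hop_mono : ∀ u v r s, u ≤ r → v ≤ s → op u v ≤ op r s)
    (hop_cont : Continuous fun p : ℝ × ℝ => op p.1 p.2)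
    -- `φ τ` is a distribution function taking values in `[0,1]`
    (hφ_monotone : ∀ τ : X, Monotone (φ τ))
    (hφ_mem : ∀ (τ : X) (ε : ℝ), φ τ ε ∈ Set.Icc (0:ℝ) 1)
    -- PNS axioms
    (hφ_zero : ∀ τ : X, φ τ 0 = 0)
    (hφ_eq_one : ∀ τ : X, (∀ ε : ℝ, 0 < ε → φ τ ε = 1) ↔ τ = 0)
    (hφ_smul : ∀ (κ : ℝ) (τ : X) (ε : ℝ), κ ≠ 0 → 0 < ε →
      φ (κ • τ) ε = φ τ (ε / |κ|))
    (hφ_tri : ∀ (τ ζ : X) (ε lam : ℝ), 0 ≤ ε → 0 ≤ lam →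
      op (φ τ ε) (φ ζ lam) ≤ φ (τ + ζ) (ε + lam))
    (hop_sigma : ∀ σ ∈ Set.Ioo (0:ℝ) 1, ∃ lam ∈ Set.Ioo (0:ℝ) 1,
      1 - σ < op (1 - lam) (1 - lam))
    (a b : ℕ → ℕ) (hab : ∀ n, a n < b n) (hb : Tendsto b atTop atTop)
    (w : ℕ → X) (ξ : X)
    (h : defStatConv a b φ w ξ) :
    ∀ ε : ℝ, 0 < ε → ∀ σ ∈ Set.Ioo (0:ℝ) 1, ∃ n₀ : ℕ,
      defDensityZero a b {k | φ (w k - w n₀) ε ≤ 1 - σ} := by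
  intro ε hε σ hσ
  obtain ⟨lam, hlam, hlt⟩ := hop_sigma σ hσ
  have hA := h (ε/2) (by positivity) lam hlam
  -- find n₀ with φ (w n₀ - ξ) (ε/2) > 1 - lam
  have hev : ∀ᶠ n in atTop,
      (((Finset.Ioc (a n) (b n)).filter
        (fun k => φ (w k - ξ) (ε/2) ≤ 1 - lam)).card : ℝ) /
        ((b n : ℝ) - (a n : ℝ)) < 1 := hA.eventually (gt_mem_nhds one_pos)
  obtain ⟨n, hn⟩ := hev.exists
  have hd : (0:ℝ) < (b n : ℝ) - (a n : ℝ) := by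
    have := hab n; push_cast; exact sub_pos.mpr (by exact_mod_cast this)
  have hcard : (((Finset.Ioc (a n) (b n)).filter
      (fun k => φ (w k - ξ) (ε/2) ≤ 1 - lam)).card : ℝ)
      < ((Finset.Ioc (a n) (b n)).card : ℝ) := by
    rw [Nat.card_Ioc]
    have := (div_lt_one hd).mp hn
    calc (((Finset.Ioc (a n) (b n)).filter
        (fun k => φ (w k - ξ) (ε/2) ≤ 1 - lam)).card : ℝ)
        < (b n : ℝ) - (a n : ℝ) := this
      _ = ((b n - a n : ℕ) : ℝ) := by
          rw [Nat.cast_sub (le_of_lt (hab n))]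
  have hcard' : ((Finset.Ioc (a n) (b n)).filter
      (fun k => φ (w k - ξ) (ε/2) ≤ 1 - lam)).card
      < (Finset.Ioc (a n) (b n)).card := by exact_mod_cast hcard
  have hss : ((Finset.Ioc (a n) (b n)).filter
      (fun k => φ (w k - ξ) (ε/2) ≤ 1 - lam)) ⊂ Finset.Ioc (a n) (b n) :=
    (Finset.filter_subset _ _).ssubset_of_ne (fun he => absurd (by rw [he]) hcard'.ne)
  obtain ⟨n₀, hn₀mem, hn₀⟩ := Finset.filter_ssubset.mp hss
  have hn₀' : 1 - lam < φ (w n₀ - ξ) (ε/2) := lt_of_not_ge hn₀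
  refine ⟨n₀, ?_⟩
  -- key: if φ (w k - w n₀) ε ≤ 1 - σ then φ (w k - ξ) (ε/2) ≤ 1 - lam
  have key : ∀ k, φ (w k - w n₀) ε ≤ 1 - σ → φ (w k - ξ) (ε/2) ≤ 1 - lam := by
    intro k hk
    by_contra hc
    push_neg at hc
    have hsym : φ (ξ - w n₀) (ε/2) = φ (w n₀ - ξ) (ε/2) := by
      have : ξ - w n₀ = (-1 : ℝ) • (w n₀ - ξ) := by
        simp [neg_smul, one_smul]
      rw [this, hφ_smul (-1) (w n₀ - ξ) (ε/2) (by norm_num) (by positivity)]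
      norm_num
    have htri := hφ_tri (w k - ξ) (ξ - w n₀) (ε/2) (ε/2)
      (by positivity) (by positivity)
    have hsum : (w k - ξ) + (ξ - w n₀) = w k - w n₀ := by abel
    have heps : ε/2 + ε/2 = ε := by ring
    rw [hsum, heps] at htri
    have hmono : op (1 - lam) (1 - lam)
        ≤ op (φ (w k - ξ) (ε/2)) (φ (ξ - w n₀) (ε/2)) := by
      apply hop_mono _ _ _ _ hc.le
      rw [hsym]; exact hn₀'.le
    have : 1 - σ < φ (w k - w n₀) ε :=
      lt_of_lt_of_le (lt_of_lt_of_le hlt hmono) htri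
    exact absurd hk (not_le.mpr this)
  -- squeeze
  have hsub : ∀ m, (((Finset.Ioc (a m) (b m)).filter
      (fun k => k ∈ {k | φ (w k - w n₀) ε ≤ 1 - σ})).card : ℝ)
      ≤ (((Finset.Ioc (a m) (b m)).filter
      (fun k => φ (w k - ξ) (ε/2) ≤ 1 - lam)).card : ℝ) := by
    intro m
    have : ((Finset.Ioc (a m) (b m)).filter
        (fun k => k ∈ {k | φ (w k - w n₀) ε ≤ 1 - σ}))
        ⊆ ((Finset.Ioc (a m) (b m)).filter
        (fun k => φ (w k - ξ) (ε/2) ≤ 1 - lam)) := by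
      intro k hk
      simp only [Finset.mem_filter, Set.mem_setOf_eq] at hk ⊢
      exact ⟨hk.1, key k hk.2⟩
    exact_mod_cast Finset.card_le_card this
  apply squeeze_zero
  · intro m
    have hdm : (0:ℝ) < (b m : ℝ) - (a m : ℝ) := by
      have := hab m; push_cast; exact sub_pos.mpr (by exact_mod_cast this)
    positivity
  · intro m
    have hdm : (0:ℝ) < (b m : ℝ) - (a m : ℝ) := by
      have := hab m; push_cast; exact sub_pos.mpr (by exact_mod_cast this)
    exact div_le_div_of_nonneg_right (hsub m) hdm.le |>.trans_eq rfl
  · exact hA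
end
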